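/- arXiv:math/9905053 — 2 statements merged into one kernel-verified Lean document; each statement's English description precedes it below -/
import Mathlib

section
/- Let K be an algebraically closed field and H a finite group. Then the following are equivalent: (1) every nonzero finite-dimensional representation of H over K has a common eigenvector, i.e. a nonzero vector v such that every element of H sends v to a scalar multiple of v; (2) there is a normal subgroup U of H such that the quotient H/U is abelian and every element of U has order a power of the characteristic of K (in particular U is trivial when char K = 0). -/
/-!
A common eigenvector of a representation carries a character `H →* Kˣ`, and a flag of common
eigenvectors shows that every `u` killed by all characters (e.g. every element of `[H, H]`) acts
unipotently in every representation. In the regular representation the part of `u` of order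
prime to `char K` acts both unipotently and semisimply, hence trivially, so `u` has
`char K`-power order.

Conversely, the `U`-invariants of a representation are nonzero (a `p`-group acting on a finite
group of exponent `p` fixes a nonzero element), `H`-stable since `U` is normal, and `H` acts on
them through the abelian group `H/U`; a commuting family of operators has a common eigenvector.
-/

open Module Polynomial

theorem exists_orderOf_eq_pow_of_forall_pow {G : Type*} [Monoid G] {p : ℕ} (hp : p.Prime ∨ p = 0)
    {x : G} (hx : IsOfFinOrder x) (h : ∀ k, ¬p ∣ orderOf (x ^ k) → x ^ k = 1) :
    ∃ a, orderOf x = p ^ a := by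
  have hn : orderOf x ≠ 0 := hx.orderOf_pos.ne'
  have hord := orderOf_pow_orderOf_div hn (Nat.ordCompl_dvd (orderOf x) p)
  have hcompl : ¬p ∣ ordCompl[p] (orderOf x) := by
    rcases hp with hp | rfl
    · exact Nat.not_dvd_ordCompl hp hn
    · exact zero_dvd_iff.not.mpr (Nat.ordCompl_pos 0 hn).ne'
  have hone : ordCompl[p] (orderOf x) = 1 := by
    rw [← hord, h _ (by rwa [hord]), orderOf_one]
  exact ⟨_, by rw [← Nat.ordProj_mul_ordCompl_eq_self (orderOf x) p, hone, mul_one]⟩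

theorem Module.End.eq_one_of_pow_eq_one_of_isNilpotent {K M : Type*} [Field K] [AddCommGroup M]
    [Module K M] {f : End K M} {m : ℕ} (hm : (m : K) ≠ 0) (hfm : f ^ m = 1)
    (hf : IsNilpotent (f - 1)) : f = 1 := by
  have hss : f.IsSemisimple := isSemisimple_of_squarefree_aeval_eq_zero
    (separable_X_pow_sub_C 1 hm one_ne_zero).squarefree (by simp [hfm])
  have hss' : (f - 1).IsSemisimple := by
    simpa using isSemisimple_sub_algebraMap_iff (μ := (1 : K)).mpr hss
  exact sub_eq_zero.mp (eq_zero_of_isNilpotent_isSemisimple hf hss')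

theorem Module.End.exists_common_eigenvector_of_commute_on {K V ι : Type*} [Field K]
    [IsAlgClosed K] [AddCommGroup V] [Module K V] [FiniteDimensional K V]
    (f : ι → End K V) {W : Submodule K V} (hW : W ≠ ⊥) (hmaps : ∀ i, W ≤ W.comap (f i))
    (hcomm : ∀ i j, ∀ x ∈ W, f i (f j x) = f j (f i x)) :
    ∃ v ∈ W, v ≠ 0 ∧ ∀ i, ∃ c : K, f i v = c • v := by
  obtain ⟨E, ⟨hEW, hE, hEmaps⟩, hmin⟩ := wellFounded_lt.has_min
    {E : Submodule K V | E ≤ W ∧ E ≠ ⊥ ∧ ∀ i, E ≤ E.comap (f i)} ⟨W, le_rfl, hW, hmaps⟩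
  -- `E ⊓ eigenspace` is invariant since the `f j` commute, so minimality forces it to be `E`
  have hscalar : ∀ i, ∃ c : K, ∀ x ∈ E, f i x = c • x := by
    intro i
    have : Nontrivial E := Submodule.nontrivial_iff_ne_bot.mpr hE
    obtain ⟨c, hc⟩ := End.exists_eigenvalue ((f i).restrict (hEmaps i))
    obtain ⟨y, hy⟩ := hc.exists_hasEigenvector
    have hEc : E ⊓ (f i).eigenspace c = E := by
      by_contra hne
      refine hmin _ ⟨inf_le_left.trans hEW, ?_, fun j x hx => ⟨hEmaps j hx.1, ?_⟩⟩
        (lt_of_le_of_ne inf_le_left hne)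
      · refine Submodule.ne_bot_iff _ |>.mpr ⟨y, ⟨y.2, ?_⟩, by simpa using hy.2⟩
        simpa [Subtype.ext_iff] using mem_eigenspace_iff.mp hy.1
      · rw [SetLike.mem_coe, mem_eigenspace_iff, hcomm i j x (hEW hx.1),
          mem_eigenspace_iff.mp hx.2, map_smul]
    exact ⟨c, fun x hx => mem_eigenspace_iff.mp (hEc.symm ▸ hx : x ∈ E ⊓ _).2⟩
  obtain ⟨v, hvE, hv⟩ := Submodule.exists_mem_ne_zero_of_ne_bot hE
  exact ⟨v, hEW hvE, hv, fun i => (hscalar i).imp fun c hc => hc v hvE⟩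

namespace Representation

theorem exists_character_of_forall_smul {K G V : Type*} [Field K] [Group G]
    [AddCommGroup V] [Module K V] (ρ : Representation K G V) {v : V} (hv : v ≠ 0)
    (h : ∀ g, ∃ c : K, ρ g v = c • v) : ∃ χ : G →* Kˣ, ∀ g, ρ g v = (χ g : K) • v := by
  choose c hc using h
  have hinj := smul_left_injective K hv
  let χ : G →* K :=
    { toFun := c
      map_one' := hinj (by simp [← hc])
      map_mul' := fun g g' => hinj <| show c (g * g') • v = (c g * c g') • v by
        rw [← hc, map_mul, Module.End.mul_apply, hc, map_smul, hc, smul_smul, mul_comm] }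
  exact ⟨χ.toHomUnits, hc⟩

theorem invariants_ne_bot_of_isPGroup {K G V : Type*} [CommRing K] [Group G] [Finite G]
    [AddCommGroup V] [Module K V] [Nontrivial V] (p : ℕ) [Fact p.Prime] [CharP K p]
    (hG : IsPGroup p G) (ρ : Representation K G V) : invariants ρ ≠ ⊥ := by
  obtain ⟨v, hv⟩ := exists_ne (0 : V)
  -- the orbit of `v` generates a finite group of exponent `p` on which `G` acts
  let W := AddSubgroup.closure (Set.range fun g => ρ g v)
  have hmaps : ∀ g, ∀ w ∈ W, ρ g w ∈ W := by
    intro g w hw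
    have := AddSubgroup.mem_map_of_mem (ρ g).toAddMonoidHom hw
    rw [AddMonoidHom.map_closure, ← Set.range_comp] at this
    exact AddSubgroup.closure_mono (by rintro _ ⟨h, rfl⟩; exact ⟨g * h, by simp⟩) this
  have hchar : ∀ w : V, p • w = 0 := fun w => by
    rw [← Nat.cast_smul_eq_nsmul K, CharP.cast_eq_zero, zero_smul]
  have : Finite W := AddCommGroup.finite_of_fg_isAddTorsion W fun w =>
    isOfFinAddOrder_iff_nsmul_eq_zero.mpr ⟨p, (Fact.out : p.Prime).pos, Subtype.ext (hchar w)⟩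
  let _ : MulAction G W :=
    { smul g w := ⟨ρ g w, hmaps g w w.2⟩
      one_smul w := Subtype.ext (by change ρ 1 w = w; simp)
      mul_smul g h w := Subtype.ext (by change ρ (g * h) w = ρ g (ρ h w); simp) }
  have hvW : v ∈ W := AddSubgroup.subset_closure ⟨1, by simp⟩
  have hdvd : p ∣ Nat.card W :=
    addOrderOf_eq_prime (x := (⟨v, hvW⟩ : W)) (Subtype.ext (hchar v)) (by simpa using hv) ▸
      addOrderOf_dvd_natCard _
  obtain ⟨w, hw, hw0⟩ := hG.exists_fixed_point_of_prime_dvd_card_of_fixed_point W hdvd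
    (a := 0) fun g => Subtype.ext (map_zero (ρ g))
  exact (Submodule.ne_bot_iff _).mpr
    ⟨w, fun g => congr_arg Subtype.val (hw g), fun h => hw0 (Subtype.ext h.symm)⟩

theorem invariants_ne_bot_of_forall_orderOf_eq_ringChar_pow {K G V : Type*} [Field K]
    [Group G] [Finite G] [AddCommGroup V] [Module K V] [Nontrivial V] (ρ : Representation K G V)
    (h : ∀ g : G, ∃ k, orderOf g = ringChar K ^ k) : invariants ρ ≠ ⊥ := by
  rcases CharP.char_is_prime_or_zero K (ringChar K) with hp | h0
  · have : Fact (ringChar K).Prime := ⟨hp⟩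
    exact invariants_ne_bot_of_isPGroup _
      (fun g => (h g).imp fun k hk => hk ▸ pow_orderOf_eq_one g) ρ
  · have htriv : ∀ g : G, g = 1 := fun g => by
      obtain ⟨k, hk⟩ := h g
      rw [h0] at hk
      rcases k with _ | k
      · exact orderOf_eq_one_iff.mp hk
      · exact absurd hk (orderOf_pos g).ne'
    obtain ⟨v, hv⟩ := exists_ne (0 : V)
    exact (Submodule.ne_bot_iff _).mpr ⟨v, fun g => by simp [htriv g], hv⟩

section Subgroup

variable {K G V : Type*} [CommRing K] [Group G] [AddCommGroup V] [Module K V]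
  (ρ : Representation K G V) {U : Subgroup G}

theorem invariants_comp_subtype_le_comap [U.Normal] (g : G) :
    invariants (ρ.comp U.subtype) ≤ (invariants (ρ.comp U.subtype)).comap (ρ g) := by
  intro x hx u
  have hconj : g⁻¹ * u * g ∈ U := by simpa using ‹U.Normal›.conj_mem u u.2 g⁻¹
  have hfix : ρ (g⁻¹ * u * g) x = x := hx ⟨_, hconj⟩
  calc ρ u (ρ g x) = ρ g (ρ (g⁻¹ * u * g) x) := by
        rw [← Module.End.mul_apply, ← map_mul, ← Module.End.mul_apply, ← map_mul]
        group
    _ = ρ g x := by rw [hfix]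

theorem apply_comm_of_mem_invariants_comp_subtype {a b : G}
    (hab : a⁻¹ * b⁻¹ * a * b ∈ U) {x : V} (hx : x ∈ invariants (ρ.comp U.subtype)) :
    ρ a (ρ b x) = ρ b (ρ a x) := by
  have hfix : ρ (a⁻¹ * b⁻¹ * a * b) x = x := hx ⟨_, hab⟩
  calc ρ a (ρ b x) = ρ b (ρ a (ρ (a⁻¹ * b⁻¹ * a * b) x)) := by
        simp only [← Module.End.mul_apply, ← map_mul]
        group
    _ = ρ b (ρ a x) := by rw [hfix]

end Subgroup

end Representation

def HasCommonEigenvectors (K H : Type) [Field K] [Group H] : Prop :=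
  ∀ (V : Type) [AddCommGroup V] [Module K V] [FiniteDimensional K V]
    (ρ : Representation K H V), (∃ v : V, v ≠ 0) →
    ∃ v : V, v ≠ 0 ∧ ∀ h : H, ∃ c : K, ρ h v = c • v

namespace HasCommonEigenvectors

variable {K H : Type} [Field K] [Group H]

theorem isNilpotent_sub_one (heig : HasCommonEigenvectors K H) {u : H}
    (hu : ∀ χ : H →* Kˣ, χ u = 1) {V : Type} [AddCommGroup V] [Module K V] [FiniteDimensional K V]
    (ρ : Representation K H V) : IsNilpotent (ρ u - 1) := by
  induction hn : finrank K V using Nat.strong_induction_on generalizing V with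
  | _ n ih =>
  rcases subsingleton_or_nontrivial V with hV | hV
  · exact ⟨1, Subsingleton.elim _ _⟩
  obtain ⟨v, hv, hρv⟩ := heig V ρ (exists_ne 0)
  obtain ⟨χ, hχ⟩ := ρ.exists_character_of_forall_smul hv hρv
  have hL : ∀ g, K ∙ v ≤ (K ∙ v).comap (ρ g) := fun g => by
    rw [Submodule.span_singleton_le_iff_mem, Submodule.mem_comap, hχ]
    exact Submodule.smul_mem _ _ (Submodule.mem_span_singleton_self v)
  have hlt : finrank K (V ⧸ K ∙ v) < n := by
    have := (K ∙ v).finrank_quotient_add_finrank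
    rw [finrank_span_singleton hv] at this
    omega
  obtain ⟨k, hk⟩ := ih _ hlt (ρ.quotient (K ∙ v) hL) rfl
  have hmem : ∀ x, ((ρ u - 1) ^ k) x ∈ K ∙ v := fun x => by
    have hL' : K ∙ v ≤ (K ∙ v).comap (ρ u - 1) := fun y hy =>
      show ρ u y - y ∈ K ∙ v from sub_mem (hL u hy) hy
    have hquot : ρ.quotient (K ∙ v) hL u - 1 = (K ∙ v).mapQ (K ∙ v) (ρ u - 1) hL' := by
      ext; simp
    have := congr($hk (Submodule.Quotient.mk x))
    rwa [hquot, ← Submodule.mapQ_pow, Submodule.mapQ_apply, LinearMap.zero_apply,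
      Submodule.Quotient.mk_eq_zero] at this
  refine ⟨k + 1, LinearMap.ext fun x => ?_⟩
  obtain ⟨c, hc⟩ := Submodule.mem_span_singleton.mp (hmem x)
  rw [pow_succ', Module.End.mul_apply, ← hc, map_smul, LinearMap.sub_apply, hχ, hu χ]
  simp

theorem eq_one_of_not_ringChar_dvd_orderOf [Finite H] (heig : HasCommonEigenvectors K H) {u : H}
    (hu : ∀ χ : H →* Kˣ, χ u = 1) (hord : ¬ringChar K ∣ orderOf u) : u = 1 := by
  let ρ := Representation.ofMulAction K H H
  have hρu : ρ u = 1 := Module.End.eq_one_of_pow_eq_one_of_isNilpotent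
    (by rwa [Ne, ringChar.spec]) (by rw [← map_pow, pow_orderOf_eq_one, map_one])
    (heig.isNilpotent_sub_one hu ρ)
  have := congr($hρu (MonoidAlgebra.single (1 : H) (1 : K)))
  simp only [ρ, Representation.ofMulAction_single, smul_eq_mul, mul_one,
    Module.End.one_apply] at this
  exact MonoidAlgebra.single_left_injective one_ne_zero this

theorem exists_orderOf_eq_ringChar_pow [Finite H] (heig : HasCommonEigenvectors K H) {u : H}
    (hu : ∀ χ : H →* Kˣ, χ u = 1) : ∃ k, orderOf u = ringChar K ^ k :=
  exists_orderOf_eq_pow_of_forall_pow (CharP.char_is_prime_or_zero K _)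
    (isOfFinOrder_of_finite u)
    fun k hk => heig.eq_one_of_not_ringChar_dvd_orderOf (fun χ => by simp [hu χ]) hk

end HasCommonEigenvectors

theorem eigenvector_tfae_unipotent_by_abelian {K : Type} [Field K] [IsAlgClosed K]
    (H : Type) [Group H] [Finite H] :
    (∀ (V : Type) [AddCommGroup V] [Module K V] [FiniteDimensional K V]
        (ρ : Representation K H V), (∃ v : V, v ≠ 0) →
        ∃ v : V, v ≠ 0 ∧ ∀ h : H, ∃ c : K, ρ h v = c • v) ↔
      (∃ U : Subgroup H, U.Normal ∧
        (∀ u : H, u ∈ U → ∃ k : ℕ, orderOf u = ringChar K ^ k) ∧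
        (∀ a b : H, a * b * a⁻¹ * b⁻¹ ∈ U)) := by
  constructor
  · intro heig
    refine ⟨commutator H, inferInstance, fun u hu =>
      HasCommonEigenvectors.exists_orderOf_eq_ringChar_pow heig
        fun χ => Abelianization.commutator_subset_ker χ hu, fun a b => ?_⟩
    rw [← commutatorElement_def]
    exact Subgroup.commutator_mem_commutator trivial trivial
  · rintro ⟨U, hU, hUord, hUcomm⟩ V _ _ _ ρ ⟨v, hv⟩
    have : Nontrivial V := ⟨v, 0, hv⟩
    obtain ⟨w, -, hw, hcw⟩ := Module.End.exists_common_eigenvector_of_commute_on (ρ ·)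
      (Representation.invariants_ne_bot_of_forall_orderOf_eq_ringChar_pow (ρ.comp U.subtype)
        fun u => Subgroup.orderOf_coe u ▸ hUord u u.2)
      (Representation.invariants_comp_subtype_le_comap ρ)
      fun a b x hx => Representation.apply_comm_of_mem_invariants_comp_subtype ρ
        (by simpa using hUcomm a⁻¹ b⁻¹) hx
    exact ⟨w, hw, hcw⟩
end

section
/- Let K be a field, X an integral regular scheme of finite type over K, Y a scheme proper over K, and f : X ⤏ Y a rational map over K. Then f is defined at every point of X of codimension at most 1; equivalently, the complement of the domain of definition of f has codimension at least 2 in X. -/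
/-!
At a point `x` of codimension `≤ 1` of a regular scheme, the local ring `𝒪_{X,x}` is a field or
a discrete valuation ring; in either case a valuation ring whose fraction field is the function
field `K(X)`. The valuative criterion for the universally closed `Y → Spec K` lifts the generic
point `Spec K(X) → Y` of `f` to a `K`-morphism `Spec 𝒪_{X,x} → Y`. Since `Y` is locally of
finite type, this spreads out to a partial map defined on a neighbourhood of `x`, which agrees
with `f` at the generic point and therefore represents `f`.
-/

open CategoryTheory AlgebraicGeometry AlgebraicGeometry.Scheme

universe u

theorem IsLocalRing.valuationRing_of_finrank_cotangentSpace_le_one (R : Type*) [CommRing R]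
    [IsNoetherianRing R] [IsLocalRing R] [IsDomain R]
    (h : Module.finrank (ResidueField R) (CotangentSpace R) ≤ 1) : ValuationRing R :=
  ((tfae_of_isNoetherianRing_of_isLocalRing_of_isDomain R).out 5 1).mp h

namespace AlgebraicGeometry.Scheme

lemma Opens.fromSpecStalkOfMem_specializes {X : Scheme.{u}} (U : X.Opens) {x y : X}
    (h : x ⤳ y) (hx : x ∈ U) (hy : y ∈ U) :
    U.fromSpecStalkOfMem x hx =
      Spec.map (X.presheaf.stalkSpecializes h) ≫ U.fromSpecStalkOfMem y hy := by
  rw [← cancel_mono U.ι]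
  simp [Opens.fromSpecStalkOfMem_ι]

lemma PartialMap.fromSpecStalkOfMem_specializes {X Y : Scheme.{u}} (g : X.PartialMap Y)
    {x y : X} (h : x ⤳ y) (hx : x ∈ g.domain) (hy : y ∈ g.domain) :
    g.fromSpecStalkOfMem hx =
      Spec.map (X.presheaf.stalkSpecializes h) ≫ g.fromSpecStalkOfMem hy := by
  rw [PartialMap.fromSpecStalkOfMem, PartialMap.fromSpecStalkOfMem,
    g.domain.fromSpecStalkOfMem_specializes h hx hy, Category.assoc]

variable {X Y S : Scheme.{u}} (sX : X ⟶ S) (sY : Y ⟶ S)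

lemma RationalMap.mem_domain_of_fromFunctionField_eq [IsIntegral X] [LocallyOfFiniteType sY]
    (f : X ⤏ Y) {x : X} (φ : Spec (X.presheaf.stalk x) ⟶ Y)
    (hφ : φ ≫ sY = X.fromSpecStalk x ≫ sX)
    (hf : Spec.map (X.presheaf.stalkSpecializes (genericPoint_specializes x)) ≫ φ =
      f.fromFunctionField) :
    x ∈ f.domain := by
  let g := PartialMap.ofFromSpecStalk sX sY φ hφ
  have hxg : x ∈ g.domain := PartialMap.mem_domain_ofFromSpecStalk sX sY φ hφ
  have hgφ : g.fromSpecStalkOfMem hxg = φ :=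
    PartialMap.fromSpecStalkOfMem_ofFromSpecStalk sX sY φ hφ
  refine RationalMap.mem_domain.mpr ⟨g, hxg, RationalMap.eq_of_fromFunctionField_eq _ _ ?_⟩
  rw [RationalMap.fromFunctionField_toRationalMap, ← hf, ← hgφ]
  exact g.fromSpecStalkOfMem_specializes _ _ _

lemma PartialMap.fromFunctionField_comp [IrreducibleSpace X] (g : X.PartialMap Y)
    (hg : g.hom ≫ sY = g.domain.ι ≫ sX) :
    g.fromFunctionField ≫ sY = X.fromSpecStalk (genericPoint X) ≫ sX := by
  change (g.domain.fromSpecStalkOfMem _ _ ≫ g.hom) ≫ sY = _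
  rw [Category.assoc, hg, Opens.fromSpecStalkOfMem_ι_assoc]

lemma PartialMap.exists_lift_fromFunctionField [IsIntegral X] [UniversallyClosed sY]
    (g : X.PartialMap Y) (hg : g.hom ≫ sY = g.domain.ι ≫ sX)
    (x : X) [ValuationRing (X.presheaf.stalk x)] :
    ∃ φ : Spec (X.presheaf.stalk x) ⟶ Y, φ ≫ sY = X.fromSpecStalk x ≫ sX ∧
      Spec.map (X.presheaf.stalkSpecializes (genericPoint_specializes x)) ≫ φ =
        g.fromFunctionField := by
  have hsY : (ValuativeCriterion.Existence ⊓ @QuasiCompact) sY := by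
    rw [← UniversallyClosed.eq_valuativeCriterion]
    infer_instance
  let sq : ValuativeCommSq sY :=
    { R := X.presheaf.stalk x
      commRing := inferInstance
      K := X.functionField
      i₁ := g.fromFunctionField
      i₂ := X.fromSpecStalk x ≫ sX
      commSq := ⟨by
        rw [g.fromFunctionField_comp sX sY hg]
        exact
          (SpecMap_stalkSpecializes_fromSpecStalk_assoc (genericPoint_specializes x) sX).symm⟩ }
  obtain ⟨l⟩ := (hsY.1 sq).exists_lift
  exact ⟨l.l, l.fac_right, l.fac_left⟩

theorem PartialMap.mem_domain_toRationalMap_of_valuationRing [IsIntegral X]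
    [UniversallyClosed sY] [LocallyOfFiniteType sY]
    (g : X.PartialMap Y) (hg : g.hom ≫ sY = g.domain.ι ≫ sX)
    (x : X) [ValuationRing (X.presheaf.stalk x)] :
    x ∈ g.toRationalMap.domain := by
  obtain ⟨φ, hφ, hg'⟩ := g.exists_lift_fromFunctionField sX sY hg x
  exact RationalMap.mem_domain_of_fromFunctionField_eq sX sY _ φ hφ hg'

end AlgebraicGeometry.Scheme

theorem mem_domain_of_codim_le_one_general {K : Type u} [Field K] {X Y : Scheme.{u}}
    (sX : X ⟶ Spec (CommRingCat.of K)) (sY : Y ⟶ Spec (CommRingCat.of K))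
    [IsIntegral X] [LocallyOfFiniteType sX]
    (hreg : ∀ x : X, ringKrullDim (X.presheaf.stalk x) =
      (Module.finrank (IsLocalRing.ResidueField (X.presheaf.stalk x))
        (IsLocalRing.CotangentSpace (X.presheaf.stalk x)) : WithBot ℕ∞))
    (f : X ⤏ Y)
    (hfK : ∃ g : X.PartialMap Y, g.toRationalMap = f ∧ g.hom ≫ sY = g.domain.ι ≫ sX)
    (hproper : IsProper sY)
    (x : X) (hx : ringKrullDim (X.presheaf.stalk x) ≤ 1) :
    x ∈ f.domain := by
  obtain ⟨g, rfl, hg⟩ := hfK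
  have : IsLocallyNoetherian X := LocallyOfFiniteType.isLocallyNoetherian sX
  have : ValuationRing (X.presheaf.stalk x) := by
    refine IsLocalRing.valuationRing_of_finrank_cotangentSpace_le_one _ ?_
    rw [hreg x] at hx
    exact_mod_cast hx
  exact g.mem_domain_toRationalMap_of_valuationRing sX sY hg x

theorem mem_domain_of_codim_le_one {K : Type u} [Field K] {X Y : Scheme.{u}}
    (sX : X ⟶ Spec (CommRingCat.of K)) (sY : Y ⟶ Spec (CommRingCat.of K))
    [IsIntegral X] [LocallyOfFiniteType sX] [QuasiCompact sX]
    (hreg : ∀ x : X, ringKrullDim (X.presheaf.stalk x) =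
      (Module.finrank (IsLocalRing.ResidueField (X.presheaf.stalk x))
        (IsLocalRing.CotangentSpace (X.presheaf.stalk x)) : WithBot ℕ∞))
    (f : X ⤏ Y)
    (hfK : ∃ g : X.PartialMap Y, g.toRationalMap = f ∧ g.hom ≫ sY = g.domain.ι ≫ sX)
    (hproper : IsProper sY)
    (x : X) (hx : ringKrullDim (X.presheaf.stalk x) ≤ 1) :
    x ∈ f.domain :=
  mem_domain_of_codim_le_one_general sX sY hreg f hfK hproper x hx
end
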